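/- arXiv:1808.04043 — 2 statements merged into one kernel-verified Lean document; each statement's English description precedes it below -/
import Mathlib

section
/- Let d be a metric on a set of points, q a query point, T a finite set of targets, and suppose targets are enumerated t₁, t₂, … in nondecreasing order of d_e(q,·), where d_e ≤ d pointwise (d_e is a lower bound for d). If after processing targets t₁,…,t_m we maintain the k smallest values of d(q,t_i) among processed targets, with current k-th smallest value D, and d_e(q, t_{m+1}) > D, then for every unprocessed target t' we have d(q, t') ≥ D; hence the k processed targets achieving the k smallest d-values are the true k nearest neighbours of q under d. -/
/-- correctness of the IER termination condition.
Targets are enumerated `t 0, t 1, …` in nondecreasing order of `de q ·`,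
`de` bounds `d` from below, the processed targets are those of index `< m`,
and `D` is the current `k`-th smallest `d`-value among them.  If
`de q (t m) > D` then every unprocessed target has `d`-value at least `D`,
hence every processed target within distance `D` is at least as close as any
unprocessed target. -/
theorem ier_termination {α : Type*} (de d : α → α → ℝ) (q : α) (t : ℕ → α)
    (m : ℕ) (D : ℝ)
    (hlb : ∀ x y, de x y ≤ d x y)
    (hsorted : ∀ i j, i ≤ j → de q (t i) ≤ de q (t j))
    (hterm : D < de q (t m)) :
    (∀ i, m ≤ i → D ≤ d q (t i)) ∧
      (∀ j, j < m → d q (t j) ≤ D → ∀ i, m ≤ i → d q (t j) ≤ d q (t i)) := by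
  have h1 : ∀ i, m ≤ i → D ≤ d q (t i) := fun i hi =>
    le_trans (le_of_lt (lt_of_lt_of_le hterm (hsorted m i hi))) (hlb q (t i))
  exact ⟨h1, fun j _ hj i hi => le_trans hj (h1 i hi)⟩
end

section
/- Suppose every target t ∈ T with finite obstacle distance to query point q either (a) has at least one fence label on some edge of the polygon containing q, or (b) has all of its labels dominated (in the sense of the fence-pruning dominance relation). Suppose further that dominance by a label of target t'' implies d_o(q,t'') ≤ d_o(q,t) via any path through the shared edge. Then if the polygon containing q has at least one fence label, the obstacle-nearest neighbour of q among T is the source target of one of the labels on the fences surrounding q. -/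
open scoped ENNReal

/-- Lemma 2, correctness of Fence Checking.  `T` is the target
set, `L ⊆ T` is the set of source targets of the fence labels on the edges of
the polygon containing the query point `q`, `dO q t` is the obstacle distance
from `q` to `t` (`∞` if no path exists), and `Dominated t` means all of `t`'s
labels were pruned by dominance.  If every target at finite obstacle distance
either has a label around `q` or is dominated, and dominance yields a labelled
target at least as close, then (provided some fence label exists) the obstacle
nearest neighbour of `q` is the source target of one of the surrounding
labels (some label's source attains the nearest distance). -/
theorem fence_checking_correct {α : Type*} (T L : Finset α)
    (dO : α → α → ℝ≥0∞) (q : α) (Dominated : α → Prop)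
    (hLT : L ⊆ T)
    (hcover : ∀ t ∈ T, dO q t < ⊤ → t ∈ L ∨ Dominated t)
    (hdom : ∀ t ∈ T, Dominated t → ∃ t'' ∈ L, dO q t'' ≤ dO q t)
    (hL : L.Nonempty) :
    ∀ tstar ∈ T, (∀ t ∈ T, dO q tstar ≤ dO q t) → dO q tstar < ⊤ →
      ∃ l ∈ L, dO q l = dO q tstar := by
  intro tstar htT hmin hfin
  rcases hcover tstar htT hfin with h | h
  · exact ⟨tstar, h, rfl⟩
  · obtain ⟨t'', ht''L, hle⟩ := hdom tstar htT h
    exact ⟨t'', ht''L, le_antisymm hle (hmin t'' (hLT ht''L))⟩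
end
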